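/- arXiv:math/9905194 — 3 statements merged into one kernel-verified Lean document; each statement's English description precedes it below -/
import Mathlib

section
/- If S ⊆ ℤ² is such that every x ∈ S has at most 3 neighbors in S (i.e. N_S(x) ≤ 3 for all x ∈ S), then the upper density of S is at most 1/2. -/
open Filter

/-- `y` is a neighbor of `x` in the 8-point (Moore) neighborhood of `ℤ²`. -/
def IsNbr (x y : ℤ × ℤ) : Prop :=
  y ≠ x ∧ |y.1 - x.1| ≤ 1 ∧ |y.2 - x.2| ≤ 1

/-- `N_S(x)`: the number of neighbors of `x` lying in `S`. -/
noncomputable def nbrCount (S : Set (ℤ × ℤ)) (x : ℤ × ℤ) : ℕ :=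
  Set.ncard {y ∈ S | IsNbr x y}

/-- The box `B_r = {x : |x₁| < r, |x₂| < r}`. -/
def box (r : ℕ) : Set (ℤ × ℤ) :=
  {x | |x.1| < (r : ℤ) ∧ |x.2| < (r : ℤ)}

/-- The upper density of `S ⊆ ℤ²`: `limsup_{r → ∞} |S ∩ B_r| / (2r-1)²`. -/
noncomputable def upperDensity (S : Set (ℤ × ℤ)) : ℝ :=
  limsup (fun r : ℕ => (Set.ncard (S ∩ box r) : ℝ) / (2 * (r : ℝ) - 1) ^ 2) atTop

/-!
Discharging. Give every point of `ℤ²` the charge `+2` if it lies in `S` and `-2` otherwise. Two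
local rules move single units of charge across lattice edges, so that at most one unit crosses
any edge, and when every point of `S` has at most three neighbours in `S` every point ends with
non-positive charge. This last fact only involves the `3 × 3` window around the point and is
checked over all `2⁹` windows. Summed over `B_r`, the transfers inside the box cancel, leaving at
most one unit for each of the `4(2r-1)` edges leaving it: `4 |S ∩ B_r| - 2(2r-1)² ≤ 4(2r-1)`.
-/

open Finset hiding box

/-- Charge sent from `p₁` to `q₁`, where `p₀ p₁ p₂` and `q₀ q₁ q₂` are adjacent parallel lines of
three points (`true` meaning "in `S`"): a point of `S` sends one unit to an empty neighbour unless
both flanks of that neighbour are in `S`, and a point of `S` with both flanks in `S` sends one unit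
to a point of `S` with both flanks empty. -/
def send (p₀ p₁ p₂ q₀ q₁ q₂ : Bool) : ℤ :=
  (if p₁ && !q₁ && !(q₀ && q₂) then 1 else 0) +
  (if p₀ && p₁ && p₂ && !q₀ && q₁ && !q₂ then 1 else 0)

def flux (p₀ p₁ p₂ q₀ q₁ q₂ : Bool) : ℤ :=
  send p₀ p₁ p₂ q₀ q₁ q₂ - send q₀ q₁ q₂ p₀ p₁ p₂

lemma flux_swap (p₀ p₁ p₂ q₀ q₁ q₂ : Bool) :
    flux q₀ q₁ q₂ p₀ p₁ p₂ = -flux p₀ p₁ p₂ q₀ q₁ q₂ :=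
  (neg_sub _ _).symm

lemma abs_flux_le_one : ∀ p₀ p₁ p₂ q₀ q₁ q₂ : Bool, |flux p₀ p₁ p₂ q₀ q₁ q₂| ≤ 1 := by
  decide

lemma charge_le_outflow : ∀ sw w nw s c n se e ne : Bool,
    (c → sw.toNat + w.toNat + nw.toNat + s.toNat + n.toNat + se.toNat + e.toNat + ne.toNat ≤ 3) →
    4 * (c.toNat : ℤ) - 2 ≤
      flux s c n sw w nw + flux s c n se e ne + flux w c e sw s se + flux w c e nw n ne := by
  decide

def mooreOffsets : Finset (ℤ × ℤ) :=
  {(-1, -1), (-1, 0), (-1, 1), (0, -1), (0, 1), (1, -1), (1, 0), (1, 1)}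

lemma isNbr_iff_sub_mem (x y : ℤ × ℤ) : IsNbr x y ↔ y - x ∈ mooreOffsets := by
  obtain ⟨y₁, y₂⟩ := y
  obtain ⟨x₁, x₂⟩ := x
  simp only [IsNbr, mooreOffsets, mem_insert, mem_singleton, Prod.mk_sub_mk, Prod.ext_iff,
    ne_eq, abs_le]
  omega

open Classical in
noncomputable def occupied (S : Set (ℤ × ℤ)) (x : ℤ × ℤ) : Bool := decide (x ∈ S)

lemma nbrCount_eq_sum (S : Set (ℤ × ℤ)) (x : ℤ × ℤ) :
    nbrCount S x = ∑ d ∈ mooreOffsets, (occupied S (x + d)).toNat := by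
  classical
  have : {y ∈ S | IsNbr x y} = (x + ·) '' ↑(mooreOffsets.filter (x + · ∈ S)) := by
    ext y
    simp [isNbr_iff_sub_mem, ← sub_eq_neg_add, and_comm]
  rw [nbrCount, this, Set.ncard_image_of_injective _ (add_right_injective x),
    Set.ncard_coe_finset, card_filter]
  refine sum_congr rfl fun d _ => ?_
  by_cases h : x + d ∈ S <;> simp [occupied, h]

/-- The net flow from `x` to `x + (-1, 0)`; the flow from `x` to `x + (1, 0)` is
`-westFlux S (x + (1, 0))`. -/
noncomputable def westFlux (S : Set (ℤ × ℤ)) (x : ℤ × ℤ) : ℤ :=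
  flux (occupied S (x + (0, -1))) (occupied S x) (occupied S (x + (0, 1)))
    (occupied S (x + (-1, -1))) (occupied S (x + (-1, 0))) (occupied S (x + (-1, 1)))

noncomputable def southFlux (S : Set (ℤ × ℤ)) (x : ℤ × ℤ) : ℤ :=
  flux (occupied S (x + (-1, 0))) (occupied S x) (occupied S (x + (1, 0)))
    (occupied S (x + (-1, -1))) (occupied S (x + (0, -1))) (occupied S (x + (1, -1)))

lemma charge_le_divergence (S : Set (ℤ × ℤ)) (h : ∀ x ∈ S, nbrCount S x ≤ 3) (x : ℤ × ℤ) :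
    4 * ((occupied S x).toNat : ℤ) - 2 ≤
      (westFlux S x - westFlux S (x + (1, 0))) + (southFlux S x - southFlux S (x + (0, 1))) := by
  have hlocal := charge_le_outflow (occupied S (x + (-1, -1))) (occupied S (x + (-1, 0)))
    (occupied S (x + (-1, 1))) (occupied S (x + (0, -1))) (occupied S x)
    (occupied S (x + (0, 1))) (occupied S (x + (1, -1))) (occupied S (x + (1, 0)))
    (occupied S (x + (1, 1))) fun hx => by
      have := h x (by simpa [occupied] using hx)
      rw [nbrCount_eq_sum, mooreOffsets] at this
      simpa [sum_insert, add_assoc] using this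
  simp only [westFlux, southFlux, add_assoc, Prod.mk_add_mk] at hlocal ⊢
  norm_num [Prod.mk_zero_zero] at hlocal ⊢
  rw [flux_swap (occupied S (x + (0, -1))), flux_swap (occupied S (x + (-1, 0)))]
  linarith

lemma sum_Ico_sub_add_one (G : ℤ → ℤ) {a b : ℤ} (h : a ≤ b) :
    ∑ z ∈ Ico a b, (G z - G (z + 1)) = G a - G b := by
  rw [Int.Ico_eq_finset_map, sum_map]
  have := sum_range_sub' (fun i : ℕ => G (a + i)) (b - a).toNat
  push_cast [← add_assoc, Int.toNat_of_nonneg (sub_nonneg.2 h)] at this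
  simpa using this

lemma sum_Ico_sub_add_one_le (G : ℤ → ℤ) {M : ℤ} (hG : ∀ z, |G z| ≤ M) (a b : ℤ) :
    ∑ z ∈ Ico a b, (G z - G (z + 1)) ≤ 2 * M := by
  have ha := abs_le.1 (hG a)
  rcases le_or_gt a b with hab | hab
  · have hb := abs_le.1 (hG b)
    rw [sum_Ico_sub_add_one G hab]
    linarith
  · rw [Ico_eq_empty_of_le hab.le, sum_empty]
    linarith

lemma sum_divergence_le (H V : ℤ × ℤ → ℤ) {M : ℤ} (hH : ∀ x, |H x| ≤ M)
    (hV : ∀ x, |V x| ≤ M) (a b c d : ℤ) :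
    ∑ x ∈ Ico a b ×ˢ Ico c d, ((H x - H (x + (1, 0))) + (V x - V (x + (0, 1)))) ≤
      2 * M * #(Ico c d) + 2 * M * #(Ico a b) := by
  rw [sum_add_distrib, sum_product_right, sum_product]
  gcongr
  · refine (sum_le_card_nsmul _ _ (2 * M) fun q _ => ?_).trans_eq (by simp [mul_comm])
    simpa using sum_Ico_sub_add_one_le (fun p => H (p, q)) (fun p => hH (p, q)) a b
  · refine (sum_le_card_nsmul _ _ (2 * M) fun p _ => ?_).trans_eq (by simp [mul_comm])
    simpa using sum_Ico_sub_add_one_le (fun q => V (p, q)) (fun q => hV (p, q)) c d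

lemma box_eq_Ico (r : ℕ) : box r = ↑(Ico (1 - r : ℤ) r ×ˢ Ico (1 - r : ℤ) r) := by
  ext x
  simp [box, abs_lt]
  omega

lemma ncard_inter_box_eq_sum (S : Set (ℤ × ℤ)) (r : ℕ) :
    (S ∩ box r).ncard = ∑ x ∈ Ico (1 - r : ℤ) r ×ˢ Ico (1 - r : ℤ) r, (occupied S x).toNat := by
  classical
  have : S ∩ box r = ↑((Ico (1 - r : ℤ) r ×ˢ Ico (1 - r : ℤ) r).filter (· ∈ S)) := by
    ext x
    simp only [box_eq_Ico, Set.mem_inter_iff, coe_filter, Set.mem_ofPred_eq]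
    tauto
  rw [this, Set.ncard_coe_finset, card_filter]
  refine sum_congr rfl fun x _ => ?_
  by_cases h : x ∈ S <;> simp [occupied, h]

lemma four_mul_ncard_inter_box_le (S : Set (ℤ × ℤ)) (h : ∀ x ∈ S, nbrCount S x ≤ 3) {r : ℕ}
    (hr : 1 ≤ r) :
    4 * ((S ∩ box r).ncard : ℤ) ≤ 2 * (2 * r - 1) ^ 2 + 4 * (2 * r - 1) := by
  have hI : (#(Ico (1 - r : ℤ) r) : ℤ) = 2 * r - 1 := by
    rw [Int.card_Ico]
    omega
  have hcharge := sum_le_sum fun x (_ : x ∈ Ico (1 - r : ℤ) r ×ˢ Ico (1 - r : ℤ) r) =>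
    charge_le_divergence S h x
  have hdiv := sum_divergence_le (westFlux S) (southFlux S)
    (fun _ => abs_flux_le_one _ _ _ _ _ _) (fun _ => abs_flux_le_one _ _ _ _ _ _) (1 - r) r (1 - r) r
  rw [sum_sub_distrib, ← mul_sum, sum_const, card_product, nsmul_eq_mul] at hcharge
  rw [ncard_inter_box_eq_sum]
  push_cast [hI] at hcharge hdiv ⊢
  linarith

lemma upperDensity_le_of_ncard_inter_box_le (S : Set (ℤ × ℤ)) {c C : ℝ}
    (h : ∀ r : ℕ, 1 ≤ r → ((S ∩ box r).ncard : ℝ) ≤ c * (2 * r - 1) ^ 2 + C * (2 * r - 1)) :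
    upperDensity S ≤ c := by
  have hlim : Tendsto (fun r : ℕ => c + C / (2 * r - 1)) atTop (nhds c) := by
    have : Tendsto (fun r : ℕ => 2 * (r : ℝ) - 1) atTop atTop :=
      tendsto_atTop_add_const_right _ _ (tendsto_natCast_atTop_atTop.const_mul_atTop two_pos)
    simpa using tendsto_const_nhds.add (tendsto_const_nhds.div_atTop this)
  refine (limsup_le_limsup ?_ (isCoboundedUnder_le_of_le atTop fun r => by positivity)
    hlim.isBoundedUnder_le).trans_eq hlim.limsup_eq
  filter_upwards [eventually_ge_atTop 1] with r hr
  have hpos : (0 : ℝ) < 2 * r - 1 := by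
    have : (1 : ℝ) ≤ r := by exact_mod_cast hr
    linarith
  rw [div_le_iff₀ (by positivity)]
  refine (h r hr).trans_eq ?_
  field_simp

theorem conjectureA (S : Set (ℤ × ℤ)) (h : ∀ x ∈ S, nbrCount S x ≤ 3) :
    upperDensity S ≤ 1 / 2 := by
  refine upperDensity_le_of_ncard_inter_box_le S (C := 1) fun r hr => ?_
  have hcount : 4 * ((S ∩ box r).ncard : ℝ) ≤ 2 * (2 * r - 1) ^ 2 + 4 * (2 * r - 1) := by
    exact_mod_cast four_mul_ncard_inter_box_le S h hr
  linarith
end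

section
/- The maximal density for maximum degree 7 equals 8/9: (a) every S ⊆ ℤ² with N_S(x) ≤ 7 for all x ∈ S has upper density at most 8/9; and (b) the set S₀ = {x ∈ ℤ² : ¬(3 ∣ x₁ and 3 ∣ x₂)} satisfies N_{S₀}(x) ≤ 7 for all x ∈ S₀ and has density exactly 8/9. -/
open Filter Topology

/-- `S` has density `d`: the sequence `|S ∩ B_r| / (2r-1)²` tends to `d`. -/
def HasDensity (S : Set (ℤ × ℤ)) (d : ℝ) : Prop :=
  Tendsto (fun r : ℕ => (Set.ncard (S ∩ box r) : ℝ) / (2 * (r : ℝ) - 1) ^ 2) atTop (𝓝 d)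

/-!
Tile `ℤ²` by the `3 × 3` blocks centred at the points of `3ℤ²`. If `N_S ≤ 7` on `S`, every
block holds at most `8` points of `S`: when the centre lies in `S`, at most `7` of the other
eight points do. The box `B_r` meets only `(2⌊r/3⌋ + 1)²` blocks, which gives the bound `8/9`.
Conversely, every point outside `3ℤ²` has the centre of its block as a neighbour missing from
the complement of `3ℤ²`, and `3ℤ²` (like any `nℤ²`, with `1/n²`) has density `1/9`.
-/

open scoped Finset

lemma box_succ (m : ℕ) :
    box (m + 1) = ↑(Finset.Icc (-(m : ℤ)) m ×ˢ Finset.Icc (-(m : ℤ)) m) := by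
  ext ⟨a, b⟩
  simp only [box, Finset.coe_product, Finset.coe_Icc, Set.mem_prod, Set.mem_Icc,
    Set.mem_ofPred_eq, abs_lt]
  omega

lemma finite_box_succ (m : ℕ) : (box (m + 1)).Finite := by
  rw [box_succ]
  exact Finset.finite_toSet _

lemma upperDensity_le_of_tendsto {S : Set (ℤ × ℤ)} {g : ℕ → ℝ} {L : ℝ}
    (hS : ∀ m : ℕ, ((S ∩ box (m + 1)).ncard : ℝ) ≤ g m)
    (hg : Tendsto (fun m : ℕ => g m / (2 * m + 1) ^ 2) atTop (𝓝 L)) :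
    upperDensity S ≤ L := by
  rw [upperDensity, ← limsup_nat_add _ 1]
  refine (limsup_le_limsup (Eventually.of_forall fun m => ?_) ?_ hg.isBoundedUnder_le).trans_eq
    hg.limsup_eq
  · push_cast
    rw [show 2 * ((m : ℝ) + 1) - 1 = 2 * m + 1 by ring]
    gcongr
    exact hS m
  · exact isCoboundedUnder_le_of_le atTop fun m => by positivity

lemma hasDensity_iff_tendsto_succ {S : Set (ℤ × ℤ)} {d : ℝ} :
    HasDensity S d ↔ Tendsto (fun m : ℕ => ((S ∩ box (m + 1)).ncard : ℝ) / (2 * m + 1) ^ 2)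
      atTop (𝓝 d) := by
  rw [HasDensity, ← tendsto_add_atTop_iff_nat 1]
  push_cast
  simp only [show ∀ m : ℝ, 2 * (m + 1) - 1 = 2 * m + 1 from fun m => by ring]

lemma tendsto_two_mul_div_add_one_div {n : ℕ} (hn : 0 < n) (c : ℕ) :
    Tendsto (fun m : ℕ => ((2 * ((m + c) / n) + 1 : ℕ) : ℝ) / (2 * m + 1)) atTop
      (𝓝 (1 / n)) := by
  have hden : Tendsto (fun m : ℕ => (2 * m + 1 : ℝ)) atTop atTop :=
    tendsto_atTop_add_const_right _ _ (tendsto_natCast_atTop_atTop.const_mul_atTop two_pos)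
  rw [tendsto_iff_norm_sub_tendsto_zero]
  refine squeeze_zero (fun _ => norm_nonneg _) (fun m => ?_)
    ((tendsto_const_nhds (x := (2 * c + n + 1 : ℝ))).div_atTop hden)
  set q := (m + c) / n
  have hlo : (q * n : ℝ) ≤ m + c := by exact_mod_cast Nat.div_mul_le_self (m + c) n
  have hhi : (m + c : ℝ) < q * n + n := by exact_mod_cast Nat.lt_div_mul_add (a := m + c) hn
  have hn' : (1 : ℝ) ≤ n := by exact_mod_cast hn
  have hpos : (0 : ℝ) < 2 * m + 1 := by positivity
  have hnum : |n * (2 * q + 1) - (2 * m + 1 : ℝ)| ≤ 2 * c + n + 1 :=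
    abs_le.2 ⟨by linarith, by linarith⟩
  calc ‖((2 * q + 1 : ℕ) : ℝ) / (2 * m + 1) - 1 / n‖
      = |n * (2 * q + 1) - (2 * m + 1 : ℝ)| / (n * (2 * m + 1)) := by
        rw [Real.norm_eq_abs, ← abs_of_pos (by positivity : (0 : ℝ) < n * (2 * m + 1)),
          ← abs_div]
        push_cast
        field_simp
    _ ≤ |n * (2 * q + 1) - (2 * m + 1 : ℝ)| / (2 * m + 1) :=
        div_le_div_of_nonneg_left (abs_nonneg _) hpos (le_mul_of_one_le_left hpos.le hn')
    _ ≤ (2 * c + n + 1) / (2 * m + 1) := by gcongr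

lemma filter_dvd_Icc_eq_image {n : ℕ} (hn : 0 < n) (m : ℕ) :
    {x ∈ Finset.Icc (-(m : ℤ)) m | (n : ℤ) ∣ x} =
      (Finset.Icc (-((m / n : ℕ) : ℤ)) (m / n : ℕ)).image ((n : ℤ) * ·) := by
  have hn' : (0 : ℤ) < n := by exact_mod_cast hn
  have hle (j : ℤ) : j ≤ ((m / n : ℕ) : ℤ) ↔ n * j ≤ m := by
    rw [Int.natCast_div, Int.le_ediv_iff_mul_le hn', mul_comm]
  ext x
  simp only [Finset.mem_filter, Finset.mem_Icc, Finset.mem_image]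
  constructor
  · rintro ⟨⟨hlo, hhi⟩, j, rfl⟩
    exact ⟨j, ⟨by linarith [(hle (-j)).2 (by linarith)], (hle j).2 hhi⟩, rfl⟩
  · rintro ⟨j, ⟨hlo, hhi⟩, rfl⟩
    exact ⟨⟨by linarith [(hle (-j)).1 (by linarith)], (hle j).1 hhi⟩, dvd_mul_right _ _⟩

lemma card_filter_dvd_Icc {n : ℕ} (hn : 0 < n) (m : ℕ) :
    #{x ∈ Finset.Icc (-(m : ℤ)) m | (n : ℤ) ∣ x} = 2 * (m / n) + 1 := by
  rw [filter_dvd_Icc_eq_image hn, Finset.card_image_of_injective _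
    (mul_right_injective₀ (by exact_mod_cast hn.ne')), Int.card_Icc]
  omega

noncomputable def closedNbhd (x : ℤ × ℤ) : Finset (ℤ × ℤ) :=
  Finset.Icc (x.1 - 1) (x.1 + 1) ×ˢ Finset.Icc (x.2 - 1) (x.2 + 1)

lemma mem_closedNbhd {x y : ℤ × ℤ} :
    y ∈ closedNbhd x ↔ |y.1 - x.1| ≤ 1 ∧ |y.2 - x.2| ≤ 1 := by
  simp only [closedNbhd, Finset.mem_product, Finset.mem_Icc, abs_le]
  omega

lemma mem_closedNbhd_comm {x y : ℤ × ℤ} : y ∈ closedNbhd x ↔ x ∈ closedNbhd y := by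
  rw [mem_closedNbhd, mem_closedNbhd, abs_sub_comm, abs_sub_comm x.2]

lemma self_mem_closedNbhd (x : ℤ × ℤ) : x ∈ closedNbhd x :=
  mem_closedNbhd.2 (by simp)

lemma isNbr_iff_mem_erase_closedNbhd {x y : ℤ × ℤ} :
    IsNbr x y ↔ y ∈ (closedNbhd x).erase x := by
  rw [Finset.mem_erase, mem_closedNbhd, IsNbr]

lemma card_erase_closedNbhd (x : ℤ × ℤ) : #((closedNbhd x).erase x) = 8 := by
  rw [Finset.card_erase_of_mem (self_mem_closedNbhd x), closedNbhd, Finset.card_product,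
    Int.card_Icc, Int.card_Icc]
  ring_nf
  rfl

lemma setOf_isNbr_eq (S : Set (ℤ × ℤ)) (x : ℤ × ℤ) :
    {y ∈ S | IsNbr x y} = S ∩ ↑((closedNbhd x).erase x) := by
  ext y
  rw [Set.mem_inter_iff, Finset.mem_coe, ← isNbr_iff_mem_erase_closedNbhd]
  rfl

lemma nbrCount_le_eight (S : Set (ℤ × ℤ)) (x : ℤ × ℤ) : nbrCount S x ≤ 8 := by
  rw [nbrCount, setOf_isNbr_eq, ← card_erase_closedNbhd x, ← Set.ncard_coe_finset]
  exact Set.ncard_inter_le_ncard_right _ _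

lemma nbrCount_le_seven_of_isNbr_notMem {S : Set (ℤ × ℤ)} {x y : ℤ × ℤ} (hxy : IsNbr x y)
    (hy : y ∉ S) : nbrCount S x ≤ 7 := by
  have hsub : {z ∈ S | IsNbr x z} ⊆ ↑(((closedNbhd x).erase x).erase y) := by
    rw [setOf_isNbr_eq]
    exact fun z ⟨hzS, hz⟩ => Finset.mem_erase.2 ⟨fun h => hy (h ▸ hzS), hz⟩
  refine (Set.ncard_le_ncard hsub (Finset.finite_toSet _)).trans_eq ?_
  rw [Set.ncard_coe_finset, Finset.card_erase_of_mem (isNbr_iff_mem_erase_closedNbhd.1 hxy),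
    card_erase_closedNbhd]

lemma ncard_inter_closedNbhd_le_eight {S : Set (ℤ × ℤ)} (hS : ∀ x ∈ S, nbrCount S x ≤ 7)
    (c : ℤ × ℤ) : (S ∩ ↑(closedNbhd c)).ncard ≤ 8 := by
  rw [← Finset.insert_erase (self_mem_closedNbhd c), Finset.coe_insert]
  by_cases hc : c ∈ S
  · rw [Set.inter_insert_of_mem hc, ← setOf_isNbr_eq]
    exact (Set.ncard_insert_le _ _).trans (Nat.succ_le_succ (hS c hc))
  · rw [Set.inter_insert_of_notMem hc, ← setOf_isNbr_eq]
    exact nbrCount_le_eight S c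

/-- `(z + 1) / 3` is the integer nearest to `z / 3`, since `/` on `ℤ` rounds down. -/
def blockCenter (x : ℤ × ℤ) : ℤ × ℤ :=
  (3 * ((x.1 + 1) / 3), 3 * ((x.2 + 1) / 3))

lemma blockCenter_mem_closedNbhd (x : ℤ × ℤ) : blockCenter x ∈ closedNbhd x := by
  rw [mem_closedNbhd, blockCenter, abs_le, abs_le]
  omega

lemma ncard_inter_box_le {S : Set (ℤ × ℤ)} (hS : ∀ x ∈ S, nbrCount S x ≤ 7) (m : ℕ) :
    (S ∩ box (m + 1)).ncard ≤ 8 * (2 * ((m + 1) / 3) + 1) ^ 2 := by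
  have hfin : (S ∩ box (m + 1)).Finite := (finite_box_succ m).inter_of_right S
  set T := {z ∈ Finset.Icc (-((m + 1 : ℕ) : ℤ)) (m + 1 : ℕ) | ((3 : ℕ) : ℤ) ∣ z}
  have hmaps : ∀ x ∈ hfin.toFinset, blockCenter x ∈ T ×ˢ T := by
    intro x hx
    rw [Set.Finite.mem_toFinset, box_succ] at hx
    simp only [Finset.coe_product, Finset.coe_Icc, Set.mem_inter_iff, Set.mem_prod,
      Set.mem_Icc] at hx
    simp only [T, blockCenter, Finset.mem_product, Finset.mem_filter, Finset.mem_Icc]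
    omega
  have hfiber : ∀ c ∈ T ×ˢ T, #{x ∈ hfin.toFinset | blockCenter x = c} ≤ 8 := by
    intro c _
    refine le_trans ?_ (ncard_inter_closedNbhd_le_eight hS c)
    rw [← Set.ncard_coe_finset]
    refine Set.ncard_le_ncard (fun x hx => ?_) ((Finset.finite_toSet _).inter_of_right S)
    simp only [Finset.coe_filter, Set.Finite.mem_toFinset, Set.mem_ofPred_eq] at hx
    obtain ⟨⟨hxS, -⟩, rfl⟩ := hx
    exact ⟨hxS, mem_closedNbhd_comm.1 (blockCenter_mem_closedNbhd x)⟩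
  calc (S ∩ box (m + 1)).ncard = #hfin.toFinset := Set.ncard_eq_toFinset_card _ hfin
    _ ≤ 8 * #(T ×ˢ T) := Finset.card_le_mul_card_image_of_maps_to hmaps 8 hfiber
    _ = 8 * (2 * ((m + 1) / 3) + 1) ^ 2 := by
      rw [Finset.card_product, card_filter_dvd_Icc (by norm_num), sq]

theorem upperDensity_le_of_nbrCount_le_seven {S : Set (ℤ × ℤ)}
    (hS : ∀ x ∈ S, nbrCount S x ≤ 7) : upperDensity S ≤ 8 / 9 := by
  refine upperDensity_le_of_tendsto (g := fun m => 8 * ((2 * ((m + 1) / 3) + 1 : ℕ) : ℝ) ^ 2)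
    (fun m => by exact_mod_cast ncard_inter_box_le hS m) ?_
  have hlim := ((tendsto_two_mul_div_add_one_div (n := 3) (by norm_num) 1).pow 2).const_mul 8
  convert hlim using 2 with m
  · rw [div_pow, mul_div_assoc]
  · norm_num

lemma nbrCount_compl_three_lattice_le_seven :
    ∀ x ∈ {x : ℤ × ℤ | ¬ (3 ∣ x.1 ∧ 3 ∣ x.2)},
      nbrCount {x : ℤ × ℤ | ¬ (3 ∣ x.1 ∧ 3 ∣ x.2)} x ≤ 7 := by
  intro x hx
  have hc : blockCenter x ∉ {x : ℤ × ℤ | ¬ (3 ∣ x.1 ∧ 3 ∣ x.2)} := fun h =>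
    h ⟨dvd_mul_right _ _, dvd_mul_right _ _⟩
  refine nbrCount_le_seven_of_isNbr_notMem (isNbr_iff_mem_erase_closedNbhd.2
    (Finset.mem_erase.2 ⟨fun h => ?_, blockCenter_mem_closedNbhd x⟩)) hc
  exact hc (h.symm ▸ hx)

lemma lattice_inter_box_succ (n m : ℕ) :
    {x : ℤ × ℤ | (n : ℤ) ∣ x.1 ∧ (n : ℤ) ∣ x.2} ∩ box (m + 1) =
      ↑({x ∈ Finset.Icc (-(m : ℤ)) m | (n : ℤ) ∣ x} ×ˢ
        {x ∈ Finset.Icc (-(m : ℤ)) m | (n : ℤ) ∣ x}) := by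
  ext x
  simp only [box_succ, Finset.coe_product, Finset.coe_filter, Set.mem_inter_iff, Set.mem_prod,
    Set.mem_ofPred_eq, Finset.mem_coe]
  tauto

lemma ncard_compl_lattice_inter_box_succ {n : ℕ} (hn : 0 < n) (m : ℕ) :
    ({x : ℤ × ℤ | ¬((n : ℤ) ∣ x.1 ∧ (n : ℤ) ∣ x.2)} ∩ box (m + 1)).ncard =
      (2 * m + 1) ^ 2 - (2 * (m / n) + 1) ^ 2 := by
  have hsplit : {x : ℤ × ℤ | ¬((n : ℤ) ∣ x.1 ∧ (n : ℤ) ∣ x.2)} ∩ box (m + 1) =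
      box (m + 1) \
        ({x : ℤ × ℤ | (n : ℤ) ∣ x.1 ∧ (n : ℤ) ∣ x.2} ∩ box (m + 1)) := by
    ext x
    simp only [Set.mem_inter_iff, Set.mem_sdiff, Set.mem_ofPred_eq]
    tauto
  rw [hsplit, Set.ncard_sdiff' Set.inter_subset_right (finite_box_succ m),
    lattice_inter_box_succ, box_succ, Set.ncard_coe_finset, Set.ncard_coe_finset,
    Finset.card_product, Finset.card_product, card_filter_dvd_Icc hn, Int.card_Icc,
    show (m + 1 - -m : ℤ).toNat = 2 * m + 1 by omega, sq, sq]

theorem hasDensity_compl_lattice {n : ℕ} (hn : 0 < n) :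
    HasDensity {x : ℤ × ℤ | ¬((n : ℤ) ∣ x.1 ∧ (n : ℤ) ∣ x.2)} (1 - 1 / n ^ 2) := by
  rw [hasDensity_iff_tendsto_succ]
  have hlim := tendsto_const_nhds (x := (1 : ℝ)) |>.sub
    ((tendsto_two_mul_div_add_one_div hn 0).pow 2)
  simp only [add_zero, div_pow, one_pow] at hlim
  refine hlim.congr fun m => ?_
  have hle : 2 * (m / n) + 1 ≤ 2 * m + 1 := by have := Nat.div_le_self m n; omega
  rw [ncard_compl_lattice_inter_box_succ hn, Nat.cast_sub (Nat.pow_le_pow_left hle 2)]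
  push_cast
  field_simp

theorem maxDensity_degree_seven :
    (∀ S : Set (ℤ × ℤ), (∀ x ∈ S, nbrCount S x ≤ 7) → upperDensity S ≤ 8 / 9) ∧
    ((∀ x ∈ {x : ℤ × ℤ | ¬ (3 ∣ x.1 ∧ 3 ∣ x.2)},
        nbrCount {x : ℤ × ℤ | ¬ (3 ∣ x.1 ∧ 3 ∣ x.2)} x ≤ 7) ∧
      HasDensity {x : ℤ × ℤ | ¬ (3 ∣ x.1 ∧ 3 ∣ x.2)} (8 / 9)) := by
  refine ⟨fun S hS => upperDensity_le_of_nbrCount_le_seven hS,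
    nbrCount_compl_three_lattice_le_seven, ?_⟩
  convert hasDensity_compl_lattice (n := 3) (by norm_num) using 1 <;> norm_num
end

section
/- For the 4-point neighborhood: if S ⊆ ℤ² is such that every x ∈ S has at most 2 orthogonal neighbors in S, then the upper density of S is at most 2/3; moreover the set {x ∈ ℤ² : x₁ ≢ x₂ (mod 3)} has every element with exactly 2 orthogonal neighbors in it and has density exactly 2/3. (Hence δ₄(2) = 2/3.) -/
open Filter Topology

/-- `y` is an orthogonal (von Neumann) neighbor of `x` in `ℤ²`. -/
def IsOrthNbr (x y : ℤ × ℤ) : Prop :=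
  y - x ∈ ({(1, 0), (-1, 0), (0, 1), (0, -1)} : Set (ℤ × ℤ))

/-- The number of orthogonal neighbors of `x` lying in `S`. -/
noncomputable def orthNbrCount (S : Set (ℤ × ℤ)) (x : ℤ × ℤ) : ℕ :=
  Set.ncard {y ∈ S | IsOrthNbr x y}

/-!
If every point of `S` has at most `m` of its four neighbours in `S`, then each `x ∈ S ∩ B_r` has at
least `4 - m` neighbours in `B_{r+1} \ S`, while a point of `B_{r+1} \ S` is a neighbour of at most
four points. Counting these neighbouring pairs both ways,
`(4 - m) |S ∩ B_r| ≤ 4 |B_{r+1} \ S| ≤ 4 ((2r+1)² - |S ∩ B_r|)`, so the upper density is at most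
`4 / (8 - m)`, which is `2/3` for `m = 2`.

The four neighbours of `x` change `x₁ - x₂` by `+1, -1, -1, +1`, so when `x₁ - x₂ ≢ 0 (mod 3)`
exactly two of them keep `x₁ - x₂ ≢ 0`. In each row of `B_r` the points with `x₁ ≡ x₂ (mod 3)`
are every third point, so they number `(2r-1)/3 + O(1)`, and the density of the complement is `2/3`.
-/

open scoped Finset

def orthDirs : Finset (ℤ × ℤ) := {(1, 0), (-1, 0), (0, 1), (0, -1)}

def orthNbrs (x : ℤ × ℤ) : Finset (ℤ × ℤ) := orthDirs.map (addLeftEmbedding x)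

lemma mem_orthNbrs {x y : ℤ × ℤ} : y ∈ orthNbrs x ↔ IsOrthNbr x y := by
  rw [orthNbrs, Finset.mem_map, IsOrthNbr]
  simp only [addLeftEmbedding_apply, ← eq_sub_iff_add_eq', exists_eq_right]
  simp [orthDirs]

lemma card_orthNbrs (x : ℤ × ℤ) : #(orthNbrs x) = 4 := by
  rw [orthNbrs, Finset.card_map]; rfl

lemma isOrthNbr_comm {x y : ℤ × ℤ} : IsOrthNbr x y ↔ IsOrthNbr y x := by
  simp only [IsOrthNbr, Set.mem_insert_iff, Set.mem_singleton_iff, Prod.ext_iff, Prod.fst_sub,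
    Prod.snd_sub]
  omega

lemma orthNbrCount_eq_card (S : Set (ℤ × ℤ)) [DecidablePred (· ∈ S)] (x : ℤ × ℤ) :
    orthNbrCount S x = #{y ∈ orthNbrs x | y ∈ S} := by
  rw [orthNbrCount, ← Set.ncard_coe_finset]
  congr 1
  ext y
  simp [mem_orthNbrs, and_comm]

noncomputable def boxFinset (r : ℕ) : Finset (ℤ × ℤ) :=
  Finset.Ioo (-(r : ℤ)) r ×ˢ Finset.Ioo (-(r : ℤ)) r

lemma coe_boxFinset (r : ℕ) : (boxFinset r : Set (ℤ × ℤ)) = box r := by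
  ext x
  simp [boxFinset, box, abs_lt]

lemma card_boxFinset (r : ℕ) : #(boxFinset r) = (2 * r - 1) ^ 2 := by
  rw [boxFinset, Finset.card_product, Int.card_Ioo, sq]
  congr <;> omega

lemma ncard_inter_box (S : Set (ℤ × ℤ)) [DecidablePred (· ∈ S)] (r : ℕ) :
    (S ∩ box r).ncard = #{x ∈ boxFinset r | x ∈ S} := by
  rw [← Set.ncard_coe_finset, Finset.coe_filter, ← coe_boxFinset]
  congr 1
  ext x
  simp [and_comm]

lemma boxFinset_mono : Monotone boxFinset := fun r s h => by
  have hIoo : Finset.Ioo (-(r : ℤ)) r ⊆ Finset.Ioo (-(s : ℤ)) s :=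
    Finset.Ioo_subset_Ioo (by omega) (by omega)
  exact Finset.product_subset_product hIoo hIoo

lemma orthNbrs_subset_boxFinset_succ {r : ℕ} {x : ℤ × ℤ} (hx : x ∈ boxFinset r) :
    orthNbrs x ⊆ boxFinset (r + 1) := by
  intro y hy
  rw [mem_orthNbrs, IsOrthNbr] at hy
  simp only [boxFinset, Finset.mem_product, Finset.mem_Ioo] at hx ⊢
  simp only [Set.mem_insert_iff, Set.mem_singleton_iff, Prod.ext_iff, Prod.fst_sub,
    Prod.snd_sub] at hy
  push_cast
  omega

section
open scoped Classical

lemma card_filter_orthNbrs_notMem (S : Set (ℤ × ℤ)) (x : ℤ × ℤ) :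
    #{y ∈ orthNbrs x | y ∉ S} = 4 - orthNbrCount S x := by
  rw [orthNbrCount_eq_card, ← card_orthNbrs x,
    ← Finset.card_filter_add_card_filter_not (s := orthNbrs x) (· ∈ S)]
  omega

lemma mul_ncard_inter_box_le {S : Set (ℤ × ℤ)} {m : ℕ} (hS : ∀ x ∈ S, orthNbrCount S x ≤ m)
    (r : ℕ) : (8 - m) * (S ∩ box r).ncard ≤ 4 * (2 * r + 1) ^ 2 := by
  set A := {x ∈ boxFinset r | x ∈ S}
  set B := {y ∈ boxFinset (r + 1) | y ∉ S}
  have hdouble : #A * (4 - m) ≤ #B * 4 := by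
    refine Finset.card_mul_le_card_mul IsOrthNbr (fun x hx => ?_) (fun y _ => ?_)
    · rw [Finset.mem_filter] at hx
      calc 4 - m ≤ #{y ∈ orthNbrs x | y ∉ S} := by
            rw [card_filter_orthNbrs_notMem]; have := hS x hx.2; omega
        _ ≤ #(B.bipartiteAbove IsOrthNbr x) := by
            refine Finset.card_le_card fun y hy => ?_
            rw [Finset.mem_filter] at hy
            simp only [Finset.mem_bipartiteAbove, B, Finset.mem_filter, ← mem_orthNbrs]
            exact ⟨⟨orthNbrs_subset_boxFinset_succ hx.1 hy.1, hy.2⟩, hy.1⟩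
    · calc #(A.bipartiteBelow IsOrthNbr y) ≤ #(orthNbrs y) := by
            refine Finset.card_le_card fun x hx => ?_
            rw [Finset.mem_bipartiteBelow, isOrthNbr_comm, ← mem_orthNbrs] at hx
            exact hx.2
        _ = 4 := card_orthNbrs y
  have hsplit : #{x ∈ boxFinset (r + 1) | x ∈ S} + #B = (2 * r + 1) ^ 2 := by
    rw [Finset.card_filter_add_card_filter_not, card_boxFinset]
    congr 1
  have hmono : #A ≤ #{x ∈ boxFinset (r + 1) | x ∈ S} :=
    Finset.card_le_card <| Finset.filter_subset_filter _ <| boxFinset_mono r.le_succ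
  rw [ncard_inter_box]
  calc (8 - m) * #A ≤ (4 - m) * #A + 4 * #A := by
        rw [← add_mul]; exact Nat.mul_le_mul_right _ (by omega)
    _ ≤ 4 * (2 * r + 1) ^ 2 := by linarith
end

lemma tendsto_two_mul_sub_one_atTop : Tendsto (fun r : ℕ => 2 * (r : ℝ) - 1) atTop atTop :=
  tendsto_atTop_add_const_right _ _ <|
    tendsto_natCast_atTop_atTop.const_mul_atTop two_pos

lemma upperDensity_le_of_ncard_le {S : Set (ℤ × ℤ)} {c : ℝ}
    (h : ∀ᶠ r : ℕ in atTop, ((S ∩ box r).ncard : ℝ) ≤ c * (2 * r + 1) ^ 2) :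
    upperDensity S ≤ c := by
  set g := fun r : ℕ => c * ((2 * (r : ℝ) + 1) / (2 * r - 1)) ^ 2
  have hratio : Tendsto (fun r : ℕ => (2 * (r : ℝ) + 1) / (2 * r - 1)) atTop (𝓝 1) := by
    have h2 := (tendsto_const_nhds (x := (2 : ℝ))).div_atTop tendsto_two_mul_sub_one_atTop
    refine ((tendsto_const_nhds (x := (1 : ℝ))).add h2).congr' ?_ |>.trans (by rw [add_zero])
    filter_upwards [eventually_ge_atTop 1] with r hr
    have : (1 : ℝ) ≤ r := by exact_mod_cast hr
    have hD : 2 * (r : ℝ) - 1 ≠ 0 := by linarith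
    field_simp
    ring
  have hg : Tendsto g atTop (𝓝 c) := by
    simpa using (hratio.pow 2).const_mul c
  have hfg : ∀ᶠ r : ℕ in atTop,
      ((S ∩ box r).ncard : ℝ) / (2 * (r : ℝ) - 1) ^ 2 ≤ g r := by
    filter_upwards [h] with r hr
    calc ((S ∩ box r).ncard : ℝ) / (2 * (r : ℝ) - 1) ^ 2
        ≤ c * (2 * r + 1) ^ 2 / (2 * (r : ℝ) - 1) ^ 2 := by gcongr
      _ = g r := by simp only [g, div_pow]; ring
  calc upperDensity S ≤ limsup g atTop :=
        limsup_le_limsup hfg (isCoboundedUnder_le_of_le atTop fun r => by positivity)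
          hg.isBoundedUnder_le
    _ = c := hg.limsup_eq

lemma hasDensity_of_abs_sub_le {S : Set (ℤ × ℤ)} {d C : ℝ}
    (h : ∀ᶠ r : ℕ in atTop,
      |((S ∩ box r).ncard : ℝ) - d * (2 * r - 1) ^ 2| ≤ C * (2 * r - 1)) :
    HasDensity S d := by
  rw [HasDensity, tendsto_iff_norm_sub_tendsto_zero]
  refine squeeze_zero' (Eventually.of_forall fun r => norm_nonneg _) ?_
    ((tendsto_const_nhds (x := C)).div_atTop tendsto_two_mul_sub_one_atTop)
  filter_upwards [h, eventually_ge_atTop 1] with r hr hr1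
  set a : ℝ := ((S ∩ box r).ncard : ℝ)
  set D : ℝ := 2 * (r : ℝ) - 1
  have hD : 0 < D := by
    have : (1 : ℝ) ≤ r := by exact_mod_cast hr1
    linarith
  have hD2 : 0 < D ^ 2 := pow_pos hD 2
  rw [Real.norm_eq_abs, show a / D ^ 2 - d = (a - d * D ^ 2) / D ^ 2 by field_simp, abs_div,
    abs_of_pos hD2, div_le_div_iff₀ hD2 hD]
  calc _ ≤ C * D * D := by gcongr
    _ = C * D ^ 2 := by ring

theorem upperDensity_le_of_orthNbrCount_le {S : Set (ℤ × ℤ)} {m : ℕ} (hm : m < 8)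
    (hS : ∀ x ∈ S, orthNbrCount S x ≤ m) : upperDensity S ≤ 4 / (8 - m) := by
  refine upperDensity_le_of_ncard_le (Eventually.of_forall fun r => ?_)
  have hm' : (m : ℝ) < 8 := by exact_mod_cast hm
  have hcount : ((8 - m : ℕ) : ℝ) * (S ∩ box r).ncard ≤ 4 * (2 * r + 1) ^ 2 := by
    exact_mod_cast mul_ncard_inter_box_le hS r
  rw [Nat.cast_sub hm.le] at hcount
  rw [div_mul_eq_mul_div, le_div_iff₀ (by linarith)]
  push_cast at hcount
  linarith

lemma abs_mul_card_filter_modEq_Ioc_sub_lt (a b v : ℤ) {n : ℕ} (hn : 0 < n) (hab : a ≤ b) :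
    |n * (#{x ∈ Finset.Ioc a b | x ≡ v [ZMOD n]} : ℤ) - (b - a)| < n := by
  rw [Int.Ioc_filter_modEq_card a b (by exact_mod_cast hn), ← Int.cast_sub, ← Int.cast_sub,
    Int.cast_natCast, Rat.floor_intCast_div_natCast, Rat.floor_intCast_div_natCast]
  have hb := Int.emod_add_mul_ediv (b - v) n
  have ha := Int.emod_add_mul_ediv (a - v) n
  have := Int.emod_nonneg (b - v) (b := n) (by omega)
  have := Int.emod_nonneg (a - v) (b := n) (by omega)
  have := Int.emod_lt_of_pos (b - v) (b := n) (by omega)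
  have := Int.emod_lt_of_pos (a - v) (b := n) (by omega)
  have hle : (a - v) / n ≤ (b - v) / n := Int.ediv_le_ediv (by omega) (by omega)
  rw [max_eq_left (by omega), abs_lt]
  constructor <;> linarith

lemma abs_three_mul_card_modEq_sub_le {r : ℕ} (hr : 0 < r) :
    |3 * (#{x ∈ boxFinset r | x.1 ≡ x.2 [ZMOD 3]} : ℤ) - (2 * r - 1) ^ 2| ≤
      2 * (2 * (r : ℤ) - 1) := by
  set I := Finset.Ioc (-(r : ℤ)) (r - 1)
  have hI : #I = 2 * (r : ℤ) - 1 := by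
    rw [Int.card_Ioc]; omega
  have hrow : ∀ c ∈ I, |3 * (#{b ∈ I | b ≡ c [ZMOD 3]} : ℤ) - (2 * r - 1)| ≤ 2 := fun c _ => by
    have := abs_mul_card_filter_modEq_Ioc_sub_lt (-(r : ℤ)) (r - 1) c (n := 3) (by norm_num)
      (by omega)
    push_cast at this
    rw [sub_neg_eq_add, (by ring : (r : ℤ) - 1 + r = 2 * r - 1)] at this
    exact Int.lt_add_one_iff.mp this
  have hsum : 3 * (#{x ∈ boxFinset r | x.1 ≡ x.2 [ZMOD 3]} : ℤ) - (2 * r - 1) ^ 2 =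
      ∑ c ∈ I, (3 * (#{b ∈ I | b ≡ c [ZMOD 3]} : ℤ) - (2 * r - 1)) := by
    rw [Finset.sum_sub_distrib, Finset.sum_const, nsmul_eq_mul, hI, ← Finset.mul_sum, boxFinset,
      ← Finset.Ioc_sub_one_right_eq_Ioo, Finset.card_filter, Finset.sum_product]
    simp only [Finset.card_filter, Int.modEq_comm]
    push_cast
    ring
  rw [hsum]
  calc _ ≤ ∑ c ∈ I, |3 * (#{b ∈ I | b ≡ c [ZMOD 3]} : ℤ) - (2 * r - 1)| :=
        Finset.abs_sum_le_sum_abs _ _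
    _ ≤ ∑ c ∈ I, 2 := Finset.sum_le_sum hrow
    _ = 2 * (2 * r - 1) := by rw [Finset.sum_const, nsmul_eq_mul, hI]; ring

abbrev diagStripes : Set (ℤ × ℤ) := {x | ¬ x.1 ≡ x.2 [ZMOD 3]}

lemma orthNbrCount_diagStripes {x : ℤ × ℤ} (hx : x ∈ diagStripes) :
    orthNbrCount diagStripes x = 2 := by
  have key : ∀ d : ℤ × ℤ, x + d ∈ diagStripes ↔ ((x.1 - x.2) % 3 + d.1 - d.2) % 3 ≠ 0 := by
    intro d
    simp only [Set.mem_ofPred_eq, Prod.fst_add, Prod.snd_add, Int.ModEq]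
    omega
  rw [orthNbrCount_eq_card, orthNbrs, Finset.filter_map, Finset.card_map]
  simp only [Function.comp_def, addLeftEmbedding_apply, key]
  have : (x.1 - x.2) % 3 = 1 ∨ (x.1 - x.2) % 3 = 2 := by
    simp only [Set.mem_ofPred_eq, Int.ModEq] at hx
    omega
  rcases this with h | h <;> rw [h] <;> decide

lemma hasDensity_diagStripes : HasDensity diagStripes (2 / 3) := by
  refine hasDensity_of_abs_sub_le (C := 2 / 3) ?_
  filter_upwards [eventually_gt_atTop 0] with r hr
  rw [ncard_inter_box]
  set a := #{x ∈ boxFinset r | x ∈ diagStripes}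
  set b := #{x ∈ boxFinset r | x.1 ≡ x.2 [ZMOD 3]}
  have hsplit : a + b = (2 * r - 1) ^ 2 := by
    rw [add_comm, ← card_boxFinset]
    exact Finset.card_filter_add_card_filter_not _
  have hN : ((2 * r - 1 : ℕ) : ℤ) = 2 * r - 1 := by omega
  have hsplitZ : (a : ℤ) + b = (2 * r - 1) ^ 2 := by rw [← hN]; exact_mod_cast hsplit
  have hb := abs_le.mp (abs_three_mul_card_modEq_sub_le hr)
  have hZ : |3 * (a : ℤ) - 2 * (2 * r - 1) ^ 2| ≤ 2 * (2 * (r : ℤ) - 1) :=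
    abs_le.mpr ⟨by linarith [hb.2], by linarith [hb.1]⟩
  have hR : |3 * (a : ℝ) - 2 * (2 * r - 1) ^ 2| ≤ 2 * (2 * (r : ℝ) - 1) := by exact_mod_cast hZ
  rw [abs_le] at hR ⊢
  constructor <;> linarith [hR.1, hR.2]

theorem delta4_two :
    (∀ S : Set (ℤ × ℤ), (∀ x ∈ S, orthNbrCount S x ≤ 2) → upperDensity S ≤ 2 / 3) ∧
    (∀ x ∈ {x : ℤ × ℤ | ¬ x.1 ≡ x.2 [ZMOD 3]},
      orthNbrCount {x : ℤ × ℤ | ¬ x.1 ≡ x.2 [ZMOD 3]} x = 2) ∧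
    HasDensity {x : ℤ × ℤ | ¬ x.1 ≡ x.2 [ZMOD 3]} (2 / 3) := by
  refine ⟨fun S hS => ?_, fun x hx => orthNbrCount_diagStripes hx, hasDensity_diagStripes⟩
  exact (upperDensity_le_of_orthNbrCount_le (by norm_num) hS).trans_eq (by norm_num)
end
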